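/- arXiv:2204.07692 — 3 statements merged into one kernel-verified Lean document; each statement's English description precedes it below -/
import Mathlib

section
/- Let L be a real number with L > 0 and define f_L(z) := 2·z^{L−1}·exp(−z²/2) / (Γ(L/2)·2^{L/2}) for z > 0. Then (1/12)·(∫₀^∞ f_L(z)^{1/3} dz)³ = 3^{L/2} · Γ((L+2)/6)³ / (8·Γ(L/2)). (Equation (A.5) in the proof of Lemma 2: the high-resolution (Panter–Dite) constant of the Lloyd–Max gain quantizer for the chi density equals χ_L/4 with χ_L = 3^{L/2}Γ³((L+2)/6)/(2Γ(L/2)).) -/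
/-!
Up to the constant `2 / (Γ(L/2) 2^{L/2})`, the cube root of the chi density is
`z^{(L-1)/3} e^{-z²/6}`, again a generalized Gamma integrand; substituting `t = z²/6` gives
`∫ f_L^{1/3} = (2 / (Γ(L/2) 2^{L/2}))^{1/3} · 6^{(L+2)/6} Γ((L+2)/6) / 2`, and cubing this
turns `6^{(L+2)/2} / 2^{L/2}` into `6 · 3^{L/2}`.
-/

open Real MeasureTheory Set

noncomputable def chiDensity (L z : ℝ) : ℝ :=
  2 * z ^ (L - 1) * exp (-z ^ 2 / 2) / (Gamma (L / 2) * 2 ^ (L / 2))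

theorem integral_rpow_mul_exp_neg_mul_sq {q b : ℝ} (hq : -1 < q) (hb : 0 < b) :
    ∫ z in Ioi (0 : ℝ), z ^ q * exp (-b * z ^ 2) =
      b⁻¹ ^ ((q + 1) / 2) * Gamma ((q + 1) / 2) / 2 := by
  have h := integral_rpow_mul_exp_neg_mul_rpow two_pos hq hb
  simp only [rpow_two] at h
  rw [h, neg_div, rpow_neg hb.le, inv_rpow hb.le]
  ring

theorem chiDensity_rpow {L z : ℝ} (p : ℝ) (hL : 0 < L) (hz : 0 < z) :
    chiDensity L z ^ p =
      (2 / (Gamma (L / 2) * 2 ^ (L / 2))) ^ p * (z ^ (p * (L - 1)) * exp (-(p / 2) * z ^ 2)) := by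
  have hΓ : 0 < Gamma (L / 2) := Gamma_pos_of_pos (half_pos hL)
  have hsplit : chiDensity L z =
      2 / (Gamma (L / 2) * 2 ^ (L / 2)) * (z ^ (L - 1) * exp (-z ^ 2 / 2)) := by
    rw [chiDensity]; ring
  rw [hsplit, mul_rpow (by positivity) (by positivity), mul_rpow (by positivity) (by positivity),
    ← rpow_mul hz.le, ← exp_mul]
  congr 2
  · rw [mul_comm]
  · congr 1; ring

theorem integral_chiDensity_rpow {L p : ℝ} (hL : 0 < L) (hp : 0 < p) (hpL : -1 < p * (L - 1)) :
    ∫ z in Ioi (0 : ℝ), chiDensity L z ^ p =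
      (2 / (Gamma (L / 2) * 2 ^ (L / 2))) ^ p *
        ((2 / p) ^ ((p * (L - 1) + 1) / 2) * Gamma ((p * (L - 1) + 1) / 2) / 2) := by
  rw [setIntegral_congr_fun measurableSet_Ioi fun z hz => chiDensity_rpow p hL hz,
    integral_const_mul, integral_rpow_mul_exp_neg_mul_sq hpL (half_pos hp), inv_div]

theorem stmt_8 (L : ℝ) (hL : 0 < L)
    (f : ℝ → ℝ)
    (hf : ∀ z, 0 < z →
      f z = 2 * z ^ (L - 1) * Real.exp (-z ^ 2 / 2) / (Real.Gamma (L / 2) * (2 : ℝ) ^ (L / 2))) :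
    (1 / 12) * (∫ z in Set.Ioi (0 : ℝ), (f z) ^ ((1 : ℝ) / 3)) ^ 3
      = (3 : ℝ) ^ (L / 2) * Real.Gamma ((L + 2) / 6) ^ 3 / (8 * Real.Gamma (L / 2)) := by
  have hΓ : 0 < Gamma (L / 2) := Gamma_pos_of_pos (half_pos hL)
  have hexp : (1 / 3 * (L - 1) + 1) / 2 = (L + 2) / 6 := by ring
  have hcube : ∀ {x : ℝ} (r : ℝ), 0 ≤ x → (x ^ r) ^ 3 = x ^ (r * 3) := fun r hx => by
    exact_mod_cast (rpow_mul_natCast hx r 3).symm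
  rw [setIntegral_congr_fun measurableSet_Ioi fun z hz =>
      (congrArg (· ^ _) (hf z hz) : f z ^ (1 / 3 : ℝ) = chiDensity L z ^ (1 / 3 : ℝ)),
    integral_chiDensity_rpow hL (by norm_num) (by linarith), hexp]
  rw [mul_pow, div_pow, mul_pow, hcube _ (by positivity), hcube _ (by norm_num),
    show (1 / 3 : ℝ) * 3 = 1 by norm_num, rpow_one,
    show (L + 2) / 6 * 3 = L / 2 + 1 by ring, rpow_add_one (by norm_num),
    show (2 : ℝ) / (1 / 3) = 2 * 3 by norm_num, mul_rpow (by norm_num) (by norm_num)]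
  field_simp
  ring
end

section
/- Let E be a real Hilbert space and F : E → ℝ a differentiable function whose gradient ∇F is β-Lipschitz for some β > 0 (so F(y) − F(x) ≤ ⟨∇F(x), y − x⟩ + (β/2)‖y − x‖² for all x, y). Let x, w̃, e ∈ E and η, δ, ε ≥ 0 satisfy ‖e‖² ≤ δ·‖∇F(x)‖² and ‖∇F(x)‖ ≤ ε. Then F( w̃ − η·(∇F(x) − e) ) − F(w̃) ≤ −(η·(1 − δ − 2ηβδ)/2)·‖∇F(x)‖² + (η·β²/2)·‖w̃ − x‖² + η²·β·ε². (The per-round descent inequality (A.13)–(A.14) in the proof of Theorem 3, in deterministic form: one step of the virtual sequence driven by the gradient at the true iterate x, corrupted by a relatively bounded reconstruction error e, decreases the loss up to terms controlled by the iterate mismatch ‖w̃ − x‖² and the gradient bound ε.) -/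
/-!
Apply the smoothness inequality at `w̃` along the step `-η (∇F(x) - e)`. Writing
`g = ∇F(x)` and `∇F(w̃) = g + d`, the first-order term is controlled by a completed square,
`-⟪g + d, g - e⟫ ≤ (‖d‖² + ‖e‖² - ‖g‖²) / 2`, in which the mismatch `d` costs only
`‖d‖² ≤ β² ‖w̃ - x‖²` and the error only `‖e‖² ≤ δ ‖g‖²`. The second-order term
`β η² ‖g - e‖² / 2 ≤ β η² (1 + δ) ‖g‖²` is split into a `δ`-part and a part bounded by `ε²`.
-/

open RealInnerProductSpace

lemma norm_sub_sq_le {E : Type*} [SeminormedAddCommGroup E] (a b : E) :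
    ‖a - b‖ ^ 2 ≤ 2 * (‖a‖ ^ 2 + ‖b‖ ^ 2) :=
  (pow_le_pow_left₀ (norm_nonneg _) (norm_sub_le a b) 2).trans add_sq_le

lemma neg_inner_add_sub_le {E : Type*} [NormedAddCommGroup E] [InnerProductSpace ℝ E]
    (a d e : E) :
    -⟪a + d, a - e⟫ ≤ (‖d‖ ^ 2 + ‖e‖ ^ 2 - ‖a‖ ^ 2) / 2 := by
  have hsq : ‖a - e + d‖ ^ 2 = ‖d‖ ^ 2 + ‖e‖ ^ 2 - ‖a‖ ^ 2 + 2 * ⟪a + d, a - e⟫ := by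
    rw [← real_inner_self_eq_norm_sq, ← real_inner_self_eq_norm_sq,
      ← real_inner_self_eq_norm_sq, ← real_inner_self_eq_norm_sq]
    simp only [inner_add_left, inner_add_right, inner_sub_left, inner_sub_right,
      real_inner_comm a e, real_inner_comm a d, real_inner_comm e d]
    ring
  linarith [sq_nonneg ‖a - e + d‖]

lemma sub_le_of_inexact_gradient_step {E : Type*} [NormedAddCommGroup E]
    [InnerProductSpace ℝ E] [CompleteSpace E] {F : E → ℝ} {β : ℝ}
    (hsmooth : ∀ x y, F y - F x ≤ ⟪gradient F x, y - x⟫ + β / 2 * ‖y - x‖ ^ 2)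
    (w g e : E) {η : ℝ} (hη : 0 ≤ η) :
    F (w - η • (g - e)) - F w ≤
      η / 2 * (‖gradient F w - g‖ ^ 2 + ‖e‖ ^ 2 - ‖g‖ ^ 2) + β * η ^ 2 / 2 * ‖g - e‖ ^ 2 := by
  have hstep := hsmooth w (w - η • (g - e))
  rw [sub_sub_cancel_left, inner_neg_right, inner_smul_right, norm_neg, norm_smul,
    Real.norm_of_nonneg hη] at hstep
  have hfirst := neg_inner_add_sub_le g (gradient F w - g) e
  rw [add_sub_cancel] at hfirst
  linarith [mul_le_mul_of_nonneg_left hfirst hη]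

theorem stmt_15_general {E : Type*} [NormedAddCommGroup E] [InnerProductSpace ℝ E] [CompleteSpace E]
    (F : E → ℝ) (β : ℝ) (hβ : 0 < β)
    (hlip : ∀ x y, ‖gradient F x - gradient F y‖ ≤ β * ‖x - y‖)
    (hsmooth : ∀ x y, F y - F x ≤ ⟪gradient F x, y - x⟫ + β / 2 * ‖y - x‖ ^ 2)
    (x wt e : E) (η δ ε : ℝ) (hη : 0 ≤ η)
    (he : ‖e‖ ^ 2 ≤ δ * ‖gradient F x‖ ^ 2)
    (hg : ‖gradient F x‖ ≤ ε) :
    F (wt - η • (gradient F x - e)) - F wt ≤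
      -(η * (1 - δ - 2 * η * β * δ) / 2) * ‖gradient F x‖ ^ 2
        + (η * β ^ 2 / 2) * ‖wt - x‖ ^ 2 + η ^ 2 * β * ε ^ 2 := by
  set g := gradient F x
  have hstep := sub_le_of_inexact_gradient_step hsmooth wt g e hη
  have hmismatch : ‖gradient F wt - g‖ ^ 2 ≤ β ^ 2 * ‖wt - x‖ ^ 2 := by
    rw [← mul_pow]
    exact pow_le_pow_left₀ (norm_nonneg _) (hlip wt x) 2
  have hdir : ‖g - e‖ ^ 2 ≤ 2 * (‖g‖ ^ 2 + δ * ‖g‖ ^ 2) :=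
    (norm_sub_sq_le g e).trans (by linarith)
  have hgrad : ‖g‖ ^ 2 ≤ ε ^ 2 := pow_le_pow_left₀ (norm_nonneg _) hg 2
  have hcoef : 0 ≤ β * η ^ 2 / 2 := by positivity
  linarith [mul_le_mul_of_nonneg_left hmismatch hη, mul_le_mul_of_nonneg_left he hη,
    mul_le_mul_of_nonneg_left hdir hcoef, mul_le_mul_of_nonneg_left hgrad hcoef]

theorem stmt_15 {E : Type*} [NormedAddCommGroup E] [InnerProductSpace ℝ E] [CompleteSpace E]
    (F : E → ℝ) (β : ℝ) (hβ : 0 < β)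
    (hdiff : Differentiable ℝ F)
    (hlip : ∀ x y, ‖gradient F x - gradient F y‖ ≤ β * ‖x - y‖)
    (hsmooth : ∀ x y, F y - F x ≤ ⟪gradient F x, y - x⟫ + β / 2 * ‖y - x‖ ^ 2)
    (x wt e : E) (η δ ε : ℝ) (hη : 0 ≤ η) (hδ : 0 ≤ δ) (hε : 0 ≤ ε)
    (he : ‖e‖ ^ 2 ≤ δ * ‖gradient F x‖ ^ 2)
    (hg : ‖gradient F x‖ ≤ ε) :
    F (wt - η • (gradient F x - e)) - F wt ≤
      -(η * (1 - δ - 2 * η * β * δ) / 2) * ‖gradient F x‖ ^ 2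
        + (η * β ^ 2 / 2) * ‖wt - x‖ ^ 2 + η ^ 2 * β * ε ^ 2 :=
  stmt_15_general F β hβ hlip hsmooth x wt e η δ ε hη he hg
end

section
/- Let E be a real Hilbert space and F : E → ℝ a differentiable function whose gradient ∇F is β-Lipschitz for some β > 0 (so F(y) − F(x) ≤ ⟨∇F(x), y − x⟩ + (β/2)‖y − x‖² for all x, y), and assume F(x) ≥ F* for all x ∈ E. Let T ≥ 1 be an integer, δ ∈ [0, 1), ε ≥ 0, κ ≥ 1, and set η := (1 − δ)/(2β(1 + δ)√T). Suppose sequences w, w̃ : {1, …, T+1} → E and e : {1, …, T} → E satisfy: w̃(1) = w(1); w̃(t+1) = w̃(t) − η·(∇F(w(t)) − e(t)); ‖e(t)‖² ≤ δ·‖∇F(w(t))‖²; ‖∇F(w(t))‖ ≤ ε; and ‖w̃(t) − w(t)‖² ≤ 4η²ε²(κ − 1)κ, for every t ∈ {1, …, T}. Then (1/T)·Σ_{t=1}^{T} ‖∇F(w(t))‖² ≤ (1/√T)·( 8β(1 + δ)·(F(w(1)) − F*)/(1 − δ)² + 2ε² ) + 2ε²(κ − 1)κ/T. (Theorem 3 of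 the paper in deterministic/pathwise form: FedVQCS with the SGD algorithm converges to a stationary point of a smooth loss at rate O(1/√T), where κ = N/S_min arises from the error-accumulation bound of top-S sparsification.) -/
/-!
Run the descent lemma along the virtual sequence `w̃`, which is an exact step of size `η` in the
direction `∇F(w t) - e t`. Since `‖e t‖² ≤ δ ‖∇F(w t)‖²`, each step decreases `F(w̃)` by at least
`η (1 - δ)/2 ‖∇F(w t)‖²`, up to an error `η β² ‖w̃ t - w t‖²` caused by evaluating the gradient at
`w t` rather than at `w̃ t`. Telescoping over `t ≤ T` and bounding `F(w̃ (T+1)) ≥ F*` gives the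
rate once `η ∝ 1/√T` is substituted.
-/

open RealInnerProductSpace Finset

section InexactGradientStep

variable {E : Type*} [NormedAddCommGroup E] [InnerProductSpace ℝ E]

/-- The increment bound of the descent lemma for the step `-η • (a - b)`, when the gradient `G` at the
base point is replaced by a nearby vector `a` and `b` is a relative error. -/
lemma inner_step_le {G a b : E} {β η δ d : ℝ} (hη : 0 ≤ η) (hβη : β * η ≤ 1 / 2)
    (hGa : ‖G - a‖ ≤ d) (hb : ‖b‖ ^ 2 ≤ δ * ‖a‖ ^ 2) :
    ⟪G, -(η • (a - b))⟫ + β / 2 * ‖-(η • (a - b))‖ ^ 2 ≤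
      -(η * (1 - δ) / 2 * ‖a‖ ^ 2) + η * d ^ 2 := by
  set v := a - b
  have hfirst : ⟪G, -(η • v)⟫ = -(η * ⟪G, v⟫) := by
    rw [inner_neg_right, real_inner_smul_right]
  have hsecond : ‖-(η • v)‖ ^ 2 = η ^ 2 * ‖v‖ ^ 2 := by
    rw [norm_neg, norm_smul, Real.norm_eq_abs, mul_pow, sq_abs]
  have hcross : -⟪G, v⟫ ≤ -⟪a, v⟫ + d * ‖v‖ := by
    have hsplit : ⟪G, v⟫ = ⟪a, v⟫ + ⟪G - a, v⟫ := by rw [inner_sub_left]; ring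
    have hcs : -(‖G - a‖ * ‖v‖) ≤ ⟪G - a, v⟫ := neg_le_of_abs_le (abs_real_inner_le_norm _ _)
    nlinarith [mul_le_mul_of_nonneg_right hGa (norm_nonneg v)]
  have hyoung : -⟪G, v⟫ ≤ -⟪a, v⟫ + ‖v‖ ^ 2 / 4 + d ^ 2 := by
    nlinarith [sq_nonneg (‖v‖ / 2 - d)]
  have hcurv : β / 2 * (η ^ 2 * ‖v‖ ^ 2) ≤ η * (‖v‖ ^ 2 / 4) := by
    nlinarith [mul_le_mul_of_nonneg_right hβη (mul_nonneg hη (sq_nonneg ‖v‖))]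
  have hpolar : ‖v‖ ^ 2 - 2 * ⟪a, v⟫ = ‖b‖ ^ 2 - ‖a‖ ^ 2 := by
    rw [norm_sub_sq_real, inner_sub_right, real_inner_self_eq_norm_sq]; ring
  rw [hfirst, hsecond]
  calc -(η * ⟪G, v⟫) + β / 2 * (η ^ 2 * ‖v‖ ^ 2)
      ≤ η * (-⟪a, v⟫ + ‖v‖ ^ 2 / 4 + d ^ 2) + η * (‖v‖ ^ 2 / 4) := by
        nlinarith [mul_le_mul_of_nonneg_left hyoung hη]
    _ = η / 2 * (‖b‖ ^ 2 - ‖a‖ ^ 2) + η * d ^ 2 := by rw [← hpolar]; ring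
    _ ≤ -(η * (1 - δ) / 2 * ‖a‖ ^ 2) + η * d ^ 2 := by
        nlinarith [mul_le_mul_of_nonneg_left hb (div_nonneg hη zero_le_two)]

lemma inexact_gradient_step_le [CompleteSpace E] {F : E → ℝ} {β η δ : ℝ} {x z b : E} (hη : 0 ≤ η) (hβη : β * η ≤ 1 / 2)
    (hsmooth : F (x - η • (gradient F z - b)) - F x ≤
      ⟪gradient F x, x - η • (gradient F z - b) - x⟫ +
        β / 2 * ‖x - η • (gradient F z - b) - x‖ ^ 2)
    (hlip : ‖gradient F x - gradient F z‖ ≤ β * ‖x - z‖)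
    (hb : ‖b‖ ^ 2 ≤ δ * ‖gradient F z‖ ^ 2) :
    F (x - η • (gradient F z - b)) ≤
      F x - η * (1 - δ) / 2 * ‖gradient F z‖ ^ 2 + η * (β * ‖x - z‖) ^ 2 := by
  rw [sub_sub_cancel_left] at hsmooth
  linarith [inner_step_le hη hβη hlip hb]

end InexactGradientStep

lemma sum_Icc_le_of_le_sub_add {f a : ℕ → ℝ} {C : ℝ} {T : ℕ}
    (h : ∀ t, 1 ≤ t → t ≤ T → f (t + 1) ≤ f t - a t + C) :
    ∑ t ∈ Icc 1 T, a t ≤ f 1 - f (T + 1) + T * C := by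
  induction T with
  | zero => simp
  | succ T ih =>
    rw [sum_Icc_succ_top (by omega)]
    have hprev := ih fun t h1 h2 => h t h1 (by omega)
    have hlast := h (T + 1) (by omega) le_rfl
    push_cast
    linarith

lemma average_le_of_telescoped_bound {β δ η ε κ D S T : ℝ} (hβ : 0 < β) (hT : 1 ≤ T) (hδ0 : 0 ≤ δ)
    (hδ1 : δ < 1) (hκ : 1 ≤ κ) (hD : 0 ≤ D)
    (hη : η = (1 - δ) / (2 * β * (1 + δ) * Real.sqrt T))
    (hS : η * (1 - δ) / 2 * S ≤ D + T * (η * β ^ 2 * (4 * η ^ 2 * ε ^ 2 * (κ - 1) * κ))) :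
    1 / T * S ≤ 1 / Real.sqrt T * (8 * β * (1 + δ) * D / (1 - δ) ^ 2 + 2 * ε ^ 2)
      + 2 * ε ^ 2 * (κ - 1) * κ / T := by
  set s := Real.sqrt T
  have hs : 0 < s := by positivity
  have hsT : s ^ 2 = T := Real.sq_sqrt (by linarith)
  have h1δ : 0 < 1 - δ := by linarith
  have hη0 : 0 < η := by rw [hη]; exact div_pos h1δ (by positivity)
  have hβηs : β * η * s = (1 - δ) / (2 * (1 + δ)) := by rw [hη]; field_simp
  have hK : 0 ≤ ε ^ 2 * ((κ - 1) * κ) := mul_nonneg (sq_nonneg ε) (by nlinarith)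
  have herror : T * (η * β ^ 2 * (4 * η ^ 2 * ε ^ 2 * (κ - 1) * κ)) ≤
      η * (1 - δ) * (ε ^ 2 * ((κ - 1) * κ)) := by
    have hratio : (1 - δ) / (1 + δ) ^ 2 ≤ 1 := by
      rw [div_le_one (by positivity)]; nlinarith
    calc T * (η * β ^ 2 * (4 * η ^ 2 * ε ^ 2 * (κ - 1) * κ))
        = η * (1 - δ) * ((1 - δ) / (1 + δ) ^ 2) * (ε ^ 2 * ((κ - 1) * κ)) := by
          rw [← hsT, show s ^ 2 * (η * β ^ 2 * (4 * η ^ 2 * ε ^ 2 * (κ - 1) * κ)) =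
            4 * η * (β * η * s) ^ 2 * (ε ^ 2 * ((κ - 1) * κ)) by ring, hβηs]
          field_simp
          ring
      _ ≤ η * (1 - δ) * 1 * (ε ^ 2 * ((κ - 1) * κ)) := by gcongr
      _ = η * (1 - δ) * (ε ^ 2 * ((κ - 1) * κ)) := by ring
  have hmain : η * (1 - δ) / 2 * (T * (1 / s * (8 * β * (1 + δ) * D / (1 - δ) ^ 2 + 2 * ε ^ 2)
      + 2 * ε ^ 2 * (κ - 1) * κ / T)) =
      2 * D + η * (1 - δ) * s * ε ^ 2 + η * (1 - δ) * (ε ^ 2 * ((κ - 1) * κ)) := by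
    rw [hη, ← hsT]
    field_simp [h1δ.ne']
    ring
  rw [one_div, inv_mul_le_iff₀ (by linarith)]
  refine le_of_mul_le_mul_left ?_ (div_pos (mul_pos hη0 h1δ) two_pos)
  have hslack : 0 ≤ η * (1 - δ) * s * ε ^ 2 :=
    mul_nonneg (mul_nonneg (mul_nonneg hη0.le h1δ.le) hs.le) (sq_nonneg ε)
  linarith

theorem stmt_16_general {E : Type*} [NormedAddCommGroup E] [InnerProductSpace ℝ E] [CompleteSpace E]
    (F : E → ℝ) (β Fstar : ℝ) (hβ : 0 < β)
    (hlip : ∀ x y, ‖gradient F x - gradient F y‖ ≤ β * ‖x - y‖)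
    (hsmooth : ∀ x y, F y - F x ≤ ⟪gradient F x, y - x⟫ + β / 2 * ‖y - x‖ ^ 2)
    (hlb : ∀ x, Fstar ≤ F x)
    (T : ℕ) (hT : 1 ≤ T)
    (δ ε κ : ℝ) (hδ0 : 0 ≤ δ) (hδ1 : δ < 1) (hκ : 1 ≤ κ)
    (η : ℝ) (hη : η = (1 - δ) / (2 * β * (1 + δ) * Real.sqrt T))
    (w wt : ℕ → E) (e : ℕ → E)
    (hinit : wt 1 = w 1)
    (hrec : ∀ t, 1 ≤ t → t ≤ T → wt (t + 1) = wt t - η • (gradient F (w t) - e t))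
    (he : ∀ t, 1 ≤ t → t ≤ T → ‖e t‖ ^ 2 ≤ δ * ‖gradient F (w t)‖ ^ 2)
    (hdev : ∀ t, 1 ≤ t → t ≤ T → ‖wt t - w t‖ ^ 2 ≤ 4 * η ^ 2 * ε ^ 2 * (κ - 1) * κ) :
    (1 / (T : ℝ)) * ∑ t ∈ Finset.Icc 1 T, ‖gradient F (w t)‖ ^ 2 ≤
      (1 / Real.sqrt T) *
          (8 * β * (1 + δ) * (F (w 1) - Fstar) / (1 - δ) ^ 2 + 2 * ε ^ 2)
        + 2 * ε ^ 2 * (κ - 1) * κ / T := by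
  have hT' : (1 : ℝ) ≤ T := by exact_mod_cast hT
  have hη0 : 0 ≤ η := by rw [hη]; exact div_nonneg (by linarith) (by positivity)
  have hβη : β * η ≤ 1 / 2 := by
    have hs : 1 ≤ Real.sqrt T := Real.one_le_sqrt.mpr hT'
    rw [hη, mul_div_assoc', div_le_iff₀ (by positivity)]
    nlinarith [mul_le_mul_of_nonneg_left hs (by positivity : 0 ≤ β * (1 + δ))]
  have hstep : ∀ t, 1 ≤ t → t ≤ T → F (wt (t + 1)) ≤ F (wt t) -
      η * (1 - δ) / 2 * ‖gradient F (w t)‖ ^ 2 +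
        η * β ^ 2 * (4 * η ^ 2 * ε ^ 2 * (κ - 1) * κ) := by
    intro t h1 h2
    rw [hrec t h1 h2]
    refine (inexact_gradient_step_le hη0 hβη (hsmooth _ _) (hlip _ _) (he t h1 h2)).trans ?_
    rw [mul_pow, mul_assoc η]
    gcongr
    exact hdev t h1 h2
  have htele := sum_Icc_le_of_le_sub_add (f := fun t => F (wt t))
    (a := fun t => η * (1 - δ) / 2 * ‖gradient F (w t)‖ ^ 2) hstep
  rw [← mul_sum, hinit] at htele
  exact average_le_of_telescoped_bound hβ hT' hδ0 hδ1 hκ (by linarith [hlb (w 1)]) hη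
    (by linarith [hlb (wt (T + 1))])

theorem stmt_16 {E : Type*} [NormedAddCommGroup E] [InnerProductSpace ℝ E] [CompleteSpace E]
    (F : E → ℝ) (β Fstar : ℝ) (hβ : 0 < β)
    (hdiff : Differentiable ℝ F)
    (hlip : ∀ x y, ‖gradient F x - gradient F y‖ ≤ β * ‖x - y‖)
    (hsmooth : ∀ x y, F y - F x ≤ ⟪gradient F x, y - x⟫ + β / 2 * ‖y - x‖ ^ 2)
    (hlb : ∀ x, Fstar ≤ F x)
    (T : ℕ) (hT : 1 ≤ T)
    (δ ε κ : ℝ) (hδ0 : 0 ≤ δ) (hδ1 : δ < 1) (hε : 0 ≤ ε) (hκ : 1 ≤ κ)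
    (η : ℝ) (hη : η = (1 - δ) / (2 * β * (1 + δ) * Real.sqrt T))
    (w wt : ℕ → E) (e : ℕ → E)
    (hinit : wt 1 = w 1)
    (hrec : ∀ t, 1 ≤ t → t ≤ T → wt (t + 1) = wt t - η • (gradient F (w t) - e t))
    (he : ∀ t, 1 ≤ t → t ≤ T → ‖e t‖ ^ 2 ≤ δ * ‖gradient F (w t)‖ ^ 2)
    (hg : ∀ t, 1 ≤ t → t ≤ T → ‖gradient F (w t)‖ ≤ ε)
    (hdev : ∀ t, 1 ≤ t → t ≤ T → ‖wt t - w t‖ ^ 2 ≤ 4 * η ^ 2 * ε ^ 2 * (κ - 1) * κ) :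
    (1 / (T : ℝ)) * ∑ t ∈ Finset.Icc 1 T, ‖gradient F (w t)‖ ^ 2 ≤
      (1 / Real.sqrt T) *
          (8 * β * (1 + δ) * (F (w 1) - Fstar) / (1 - δ) ^ 2 + 2 * ε ^ 2)
        + 2 * ε ^ 2 * (κ - 1) * κ / T :=
  stmt_16_general F β Fstar hβ hlip hsmooth hlb T hT δ ε κ hδ0 hδ1 hκ η hη w wt e hinit hrec he hdev
end
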